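/- M has a realization over k if and only if there exists s : E → k with s e ≠ 0 for every e ∈ E such that MvPolynomial.eval s f = 0 for every f ∈ I_M. -/

import Mathlib

open Classical Matrix MvPolynomial

/-- `V` is a realization of the matroid `M`: a set `I` is independent in `M` iff the
columns of `V` indexed by `I` are linearly independent over `k`. -/
def IsRealization {k : Type*} [Field k] {n d : ℕ} (M : Matroid (Fin n))
    (V : Matrix (Fin (d + 1)) (Fin n) k) : Prop :=
  ∀ I : Set (Fin n), M.Indep I ↔ LinearIndependent k (fun i : I => Vᵀ (i : Fin n))

/-- `F` is a hyperplane of `M`: a flat of `M` of rank `d`. -/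
def IsHyperplane {n : ℕ} (M : Matroid (Fin n)) (d : ℕ) (F : Set (Fin n)) : Prop :=
  M.IsFlat F ∧ ∃ I, M.IsBasis I F ∧ I.ncard = d

/-- `H` is a bijection onto the set of hyperplanes of `M`. -/
def HypEnum {n h : ℕ} (M : Matroid (Fin n)) (d : ℕ) (H : Fin h → Set (Fin n)) : Prop :=
  Function.Injective H ∧ ∀ F : Set (Fin n), (∃ j, H j = F) ↔ IsHyperplane M d F

/-- `M` has rank `r` : some base of `M` has cardinality `r`. -/
def HasRank {n : ℕ} (M : Matroid (Fin n)) (r : ℕ) : Prop :=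
  ∃ B, M.IsBase B ∧ B.ncard = r

/-- `W` is a normal matrix for the realization `V`: the dot product of column `j` of `W`
with column `i` of `V` is zero iff `i ∈ H j`. -/
def IsNormalMatrix {k : Type*} [Field k] {n d h : ℕ} (H : Fin h → Set (Fin n))
    (V : Matrix (Fin (d + 1)) (Fin n) k) (W : Matrix (Fin (d + 1)) (Fin h) k) : Prop :=
  ∀ i j, (∑ r : Fin (d + 1), W r j * V r i) = 0 ↔ i ∈ H j

/-- Projective equivalence of realizations. -/
def ProjEquiv {k : Type*} [Field k] {n d : ℕ}
    (V V' : Matrix (Fin (d + 1)) (Fin n) k) : Prop :=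
  ∃ (A : Matrix (Fin (d + 1)) (Fin (d + 1)) k) (b : Fin n → kˣ),
    IsUnit A ∧ V' = A * V * Matrix.diagonal (fun i => (b i : k))

/-- The index type of slack variables: pairs `(i, j)` with `i ∉ H j`. -/
abbrev SlackVar {n h : ℕ} (H : Fin h → Set (Fin n)) : Type :=
  {p : Fin n × Fin h // p.1 ∉ H p.2}

/-- The symbolic slack matrix of `M`. -/
noncomputable def symbSlack {n h : ℕ} (H : Fin h → Set (Fin n)) (k : Type*) [Field k] :
    Matrix (Fin n) (Fin h) (MvPolynomial (SlackVar H) k) :=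
  fun i j => if hij : i ∈ H j then 0 else X ⟨(i, j), hij⟩

/-- The ideal `J` generated by the `(d+2)`-minors of the symbolic slack matrix. -/
noncomputable def minorIdeal {n h : ℕ} (d : ℕ) (H : Fin h → Set (Fin n)) (k : Type*)
    [Field k] : Ideal (MvPolynomial (SlackVar H) k) :=
  Ideal.span { f | ∃ (r : Fin (d + 2) → Fin n) (c : Fin (d + 2) → Fin h),
    Function.Injective r ∧ Function.Injective c ∧
      f = ((symbSlack H k).submatrix r c).det }

/-- The product `P` of all slack variables. -/
noncomputable def allVarsProd {n h : ℕ} (H : Fin h → Set (Fin n)) (k : Type*) [Field k] :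
    MvPolynomial (SlackVar H) k :=
  ∏ e : SlackVar H, X e

/-- The slack ideal `I_M` : the saturation of `J` at `P`, as a set. -/
noncomputable def slackSet {n h : ℕ} (d : ℕ) (H : Fin h → Set (Fin n)) (k : Type*) [Field k] :
    Set (MvPolynomial (SlackVar H) k) :=
  {f | ∃ N : ℕ, allVarsProd H k ^ N * f ∈ minorIdeal d H k}

/-- The matrix `S(s)` obtained by evaluating the symbolic slack matrix at `s`. -/
noncomputable def slackEval {k : Type*} [Field k] {n h : ℕ} (H : Fin h → Set (Fin n))
    (s : SlackVar H → k) : Matrix (Fin n) (Fin h) k :=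
  fun i j => if hij : i ∈ H j then 0 else s ⟨(i, j), hij⟩

/-- Cyclic successor in `Fin m`. -/
def cycSucc {m : ℕ} (i : Fin m) : Fin m := ⟨(i.val + 1) % m, Nat.mod_lt _ i.pos⟩

/-- The cycle ideal `C_S` of a slack matrix `S`. -/
noncomputable def cycleIdeal {k : Type*} [Field k] {n h : ℕ} (H : Fin h → Set (Fin n))
    (S : Matrix (Fin n) (Fin h) k) : Ideal (MvPolynomial (SlackVar H) k) :=
  Ideal.span { f | ∃ (m : ℕ) (_ : 2 ≤ m) (a : Fin m → Fin n) (b : Fin m → Fin h)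
    (_ : Function.Injective a) (_ : Function.Injective b)
    (h1 : ∀ i, a i ∉ H (b i)) (h2 : ∀ i, a (cycSucc i) ∉ H (b i)),
    f = C (∏ i, S (a (cycSucc i)) (b i)) * ∏ i, X ⟨(a i, b i), h1 i⟩
      - C (∏ i, S (a i) (b i)) * ∏ i, X ⟨(a (cycSucc i), b i), h2 i⟩ }

/-!
A realization `V` yields, for every hyperplane `H j`, a normal vector `w j` vanishing on exactly
the columns of `V` indexed by `H j`; the slack matrix `Vᵀ W` then has the zero pattern of the
symbolic slack matrix and factors through `k^(d+1)`, so its `(d+2)`-minors vanish. At a point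
with no zero coordinate the product of the variables is invertible, so the saturation vanishes
there exactly when the minors do.

Conversely let `S` have that zero pattern and vanishing `(d+2)`-minors. For a base `B` and the
fundamental hyperplanes `cl(B - b)`, `b ∈ B`, the square submatrix `Q` on these rows and columns
is diagonal with nonzero diagonal, and the Schur complement of `Q` in the bordered minors gives
`S = C Q⁻¹ R`, with `C` and `R` the columns and rows of `S` through `Q`. The coefficient of row `e`
along `b` vanishes when `e ∈ cl(B - b)`, so a dependent set has a row in the span of the rows of a
basis of it; hence the rows of `S` realize `M`, and so do the rows of `C Q⁻¹`, which are the columns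
of the realization.
-/

open Function

namespace Matrix

variable {R K : Type*} [CommRing R] [Field K] {m ι : Type*}

def MinorsVanish (q : ℕ) (A : Matrix m ι R) : Prop :=
  ∀ (r : Fin q → m) (c : Fin q → ι), Injective r → Injective c → (A.submatrix r c).det = 0

theorem MinorsVanish.det_submatrix_eq_zero {q : ℕ} {A : Matrix m ι R} (hA : A.MinorsVanish q)
    (r : Fin q → m) (c : Fin q → ι) : (A.submatrix r c).det = 0 := by
  by_cases hr : Injective r
  · by_cases hc : Injective c
    · exact hA r c hr hc
    obtain ⟨a, b, hab, hne⟩ := not_injective_iff.1 hc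
    exact det_zero_of_column_eq hne fun i => by simp [hab]
  obtain ⟨a, b, hab, hne⟩ := not_injective_iff.1 hr
  exact det_zero_of_row_eq hne (by ext j; simp [hab])

theorem minorsVanish_mul {p q : ℕ} (A : Matrix m (Fin p) K) (B : Matrix (Fin p) ι K)
    (hpq : p < q) : (A * B).MinorsVanish q := by
  intro r c _ _
  by_contra hdet
  have hle : ((A * B).submatrix r c).rank ≤ p := by
    rw [submatrix_mul A B r (id : Fin p → Fin p) c bijective_id]
    exact (rank_mul_le_left _ _).trans (rank_le_width _)
  rw [rank_of_det_ne_zero hdet, Fintype.card_fin] at hle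
  omega

-- The Schur complement of `A.submatrix β γ` in each bordered `(p+1) × (p+1)` minor vanishes.
theorem MinorsVanish.eq_mul_inv_mul {p : ℕ} {A : Matrix m ι K} (hA : A.MinorsVanish (p + 1))
    {β : Fin p → m} {γ : Fin p → ι} (hQ : (A.submatrix β γ).det ≠ 0) :
    A = A.submatrix id γ * (A.submatrix β γ)⁻¹ * A.submatrix β id := by
  ext e c
  have h0 := hA.det_submatrix_eq_zero
    (Sum.elim β (fun _ : Fin 1 => e) ∘ finSumFinEquiv.symm)
    (Sum.elim γ (fun _ : Fin 1 => c) ∘ finSumFinEquiv.symm)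
  have hblocks : A.submatrix (Sum.elim β fun _ : Fin 1 => e) (Sum.elim γ fun _ : Fin 1 => c) =
      fromBlocks (A.submatrix β γ) (A.submatrix β fun _ : Fin 1 => c)
        (A.submatrix (fun _ : Fin 1 => e) γ) (A.submatrix (fun _ => e) fun _ => c) := by
    ext (a | a) (b | b) <;> rfl
  have := (A.submatrix β γ).invertibleOfIsUnitDet hQ.isUnit
  rw [← submatrix_submatrix, det_submatrix_equiv_self, hblocks, det_fromBlocks₁₁,
    mul_eq_zero, or_iff_right hQ, det_fin_one, sub_apply, sub_eq_zero, invOf_eq_nonsing_inv] at h0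
  simpa [mul_apply] using h0

theorem linearIndepOn_mul_iff {p : ℕ} (A : Matrix m (Fin p) K) {B : Matrix (Fin p) ι K}
    (hB : LinearIndependent K B.row) (s : Set m) :
    LinearIndepOn K (A * B).row s ↔ LinearIndepOn K A.row s :=
  (vecMulLinear B).linearIndepOn_iff_of_injOn (vecMul_injective_iff.2 hB).injOn

end Matrix

theorem Submodule.exists_dotProduct_eq_zero_iff {K : Type*} [Field K] {p : ℕ}
    {U : Submodule K (Fin (p + 1) → K)} (hU : Module.finrank K U = p) :
    ∃ w : Fin (p + 1) → K, ∀ x, w ⬝ᵥ x = 0 ↔ x ∈ U := by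
  have hUtop : U < ⊤ := by
    refine lt_top_iff_ne_top.2 fun htop => ?_
    rw [htop, finrank_top, Module.finrank_fin_fun] at hU
    omega
  obtain ⟨φ, hφ, hφU⟩ := Submodule.exists_dual_map_eq_bot_of_lt_top hUtop inferInstance
  have hker : U = LinearMap.ker φ := by
    refine Submodule.eq_of_le_of_finrank_le (LinearMap.le_ker_iff_map.2 hφU) ?_
    have := Submodule.finrank_lt (s := LinearMap.ker φ) (mt LinearMap.ker_eq_top.1 hφ)
    rw [Module.finrank_fin_fun] at this
    omega
  refine ⟨fun r => φ fun j => if r = j then 1 else 0, fun x => ?_⟩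
  rw [hker, LinearMap.mem_ker, LinearMap.pi_apply_eq_sum_univ φ x]
  simp only [dotProduct, smul_eq_mul, mul_comm]

def HasZeroPattern {R m ι : Type*} [Zero R] (H : ι → Set m) (S : Matrix m ι R) : Prop :=
  ∀ i j, S i j = 0 ↔ i ∈ H j

section TorusPoints

variable {k : Type*} [Field k] {n d h : ℕ} {H : Fin h → Set (Fin n)}

theorem slackEval_hasZeroPattern {s : SlackVar H → k} (hs : ∀ e, s e ≠ 0) :
    HasZeroPattern H (slackEval H s) := by
  intro i j
  unfold slackEval
  split_ifs with hij
  · exact iff_of_true rfl hij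
  · exact iff_of_false (hs _) hij

theorem HasZeroPattern.slackEval_eq {S : Matrix (Fin n) (Fin h) k} (hS : HasZeroPattern H S) :
    slackEval H (fun e => S e.1.1 e.1.2) = S := by
  ext i j
  unfold slackEval
  split_ifs with hij
  · exact ((hS i j).2 hij).symm
  · rfl

theorem eval_det_submatrix_symbSlack (s : SlackVar H → k) {q : ℕ} (r : Fin q → Fin n)
    (c : Fin q → Fin h) :
    eval s ((symbSlack H k).submatrix r c).det = ((slackEval H s).submatrix r c).det := by
  rw [RingHom.map_det]
  congr 1
  ext i j
  simp only [RingHom.mapMatrix_apply, map_apply, submatrix_apply, symbSlack, slackEval]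
  split_ifs <;> simp

theorem forall_slackSet_eval_eq_zero_iff {s : SlackVar H → k} (hs : ∀ e, s e ≠ 0) :
    (∀ f ∈ slackSet d H k, eval s f = 0) ↔ (slackEval H s).MinorsVanish (d + 2) := by
  constructor
  · intro hvan r c hr hc
    rw [← eval_det_submatrix_symbSlack]
    refine hvan _ ⟨0, ?_⟩
    rw [pow_zero, one_mul]
    exact Ideal.subset_span ⟨r, c, hr, hc, rfl⟩
  · rintro hmin f ⟨N, hN⟩
    have hJ : minorIdeal d H k ≤ RingHom.ker (eval s) := by
      rw [minorIdeal, Ideal.span_le]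
      rintro _ ⟨r, c, hr, hc, rfl⟩
      rw [SetLike.mem_coe, RingHom.mem_ker, eval_det_submatrix_symbSlack]
      exact hmin r c hr hc
    have hP : eval s (allVarsProd H k) ≠ 0 := by
      simpa [allVarsProd, Finset.prod_eq_zero_iff] using hs
    simpa [RingHom.mem_ker, hP] using hJ hN

theorem exists_torus_point_iff :
    (∃ s : SlackVar H → k, (∀ e, s e ≠ 0) ∧ ∀ f ∈ slackSet d H k, eval s f = 0) ↔
      ∃ S : Matrix (Fin n) (Fin h) k, HasZeroPattern H S ∧ S.MinorsVanish (d + 2) := by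
  constructor
  · rintro ⟨s, hs, hvan⟩
    exact ⟨slackEval H s, slackEval_hasZeroPattern hs,
      (forall_slackSet_eval_eq_zero_iff hs).1 hvan⟩
  · rintro ⟨S, hS, hmin⟩
    have hs : ∀ e : SlackVar H, S e.1.1 e.1.2 ≠ 0 := fun e h0 => e.2 ((hS _ _).1 h0)
    refine ⟨_, hs, (forall_slackSet_eval_eq_zero_iff hs).2 ?_⟩
    rwa [hS.slackEval_eq]

end TorusPoints

section Realization

variable {k : Type*} [Field k] {n d h : ℕ} {M : Matroid (Fin n)}
  {V : Matrix (Fin (d + 1)) (Fin n) k}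

theorem IsRealization.mem_closure_iff (hE : M.E = Set.univ) (hV : IsRealization M V)
    {I : Set (Fin n)} (hI : M.Indep I) {x : Fin n} :
    x ∈ M.closure I ↔ V.col x ∈ Submodule.span k (V.col '' I) := by
  have hVI : LinearIndepOn k V.col I := (hV I).1 hI
  rw [hI.mem_closure_iff', hVI.mem_span_iff, hE]
  exact (and_iff_right (Set.mem_univ x)).trans (imp_congr_left (hV _))

theorem IsRealization.exists_normal_of_isHyperplane (hE : M.E = Set.univ)
    (hV : IsRealization M V) {F : Set (Fin n)} (hF : IsHyperplane M d F) :
    ∃ w : Fin (d + 1) → k, ∀ i, ∑ r, w r * V r i = 0 ↔ i ∈ F := by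
  obtain ⟨hflat, I, hIF, hcard⟩ := hF
  have hli : LinearIndependent k (fun i : I => V.col i) := (hV I).1 hIF.indep
  have hrank : Module.finrank k (Submodule.span k (V.col '' I)) = d := by
    rw [Set.image_eq_range, finrank_span_eq_card hli, ← Nat.card_eq_fintype_card,
      Nat.card_coe_set_eq, hcard]
  obtain ⟨w, hw⟩ := Submodule.exists_dotProduct_eq_zero_iff hrank
  refine ⟨w, fun i => ?_⟩
  rw [← hflat.closure, ← hIF.closure_eq_closure, hV.mem_closure_iff hE hIF.indep, ← hw]
  rfl

theorem IsRealization.exists_isNormalMatrix (hE : M.E = Set.univ) (hV : IsRealization M V)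
    {H : Fin h → Set (Fin n)} (hH : ∀ j, IsHyperplane M d (H j)) :
    ∃ W, IsNormalMatrix H V W := by
  choose w hw using fun j => hV.exists_normal_of_isHyperplane hE (hH j)
  exact ⟨Matrix.of fun r j => w j r, fun i j => hw j i⟩

theorem IsNormalMatrix.hasZeroPattern {H : Fin h → Set (Fin n)}
    {W : Matrix (Fin (d + 1)) (Fin h) k} (hW : IsNormalMatrix H V W) :
    HasZeroPattern H (Vᵀ * W) := by
  intro i j
  simp only [mul_apply, transpose_apply, mul_comm (V _ i)]
  exact hW i j

end Realization

section FundamentalHyperplanes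

variable {k : Type*} [Field k] {n d h : ℕ} {M : Matroid (Fin n)} {H : Fin h → Set (Fin n)}
  {B : Set (Fin n)}

theorem HasRank.exists_enum_of_isBase (hrk : HasRank M (d + 1)) (hB : M.IsBase B) :
    ∃ β : Fin (d + 1) → Fin n, Injective β ∧ Set.range β = B := by
  obtain ⟨B₀, hB₀, hcard⟩ := hrk
  have hcard : Nat.card B = d + 1 := by
    rw [Nat.card_coe_set_eq, hB.ncard_eq_ncard_of_isBase hB₀, hcard]
  let e := (Finite.equivFinOfCardEq hcard).symm
  exact ⟨Subtype.val ∘ e, Subtype.val_injective.comp e.injective, by simp [Set.range_comp]⟩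

theorem HasRank.isHyperplane_closure_diff_singleton (hrk : HasRank M (d + 1))
    (hB : M.IsBase B) {b : Fin n} (hb : b ∈ B) : IsHyperplane M d (M.closure (B \ {b})) := by
  obtain ⟨B₀, hB₀, hcard⟩ := hrk
  refine ⟨M.isFlat_closure _, B \ {b}, (hB.indep.subset Set.sdiff_subset).isBasis_closure, ?_⟩
  rw [Set.ncard_sdiff_singleton_of_mem hb, hB.ncard_eq_ncard_of_isBase hB₀, hcard,
    Nat.add_sub_cancel]

theorem exists_fundamental_hyperplanes (hrk : HasRank M (d + 1)) (hH : HypEnum M d H)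
    (hB : M.IsBase B) :
    ∃ (β : Fin (d + 1) → Fin n) (γ : Fin (d + 1) → Fin h), Injective β ∧ Set.range β = B ∧
      ∀ t, H (γ t) = M.closure (B \ {β t}) := by
  obtain ⟨β, hβ, hβB⟩ := hrk.exists_enum_of_isBase hB
  have hmem : ∀ t, β t ∈ B := fun t => hβB ▸ Set.mem_range_self t
  choose γ hγ using fun t => (hH.2 _).2 (hrk.isHyperplane_closure_diff_singleton hB (hmem t))
  exact ⟨β, γ, hβ, hβB, hγ⟩

variable {S : Matrix (Fin n) (Fin h) k} (hS : HasZeroPattern H S) (hB : M.IsBase B)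
  {β : Fin (d + 1) → Fin n} {γ : Fin (d + 1) → Fin h} (hβ : Injective β) (hβB : Set.range β = B)
  (hγ : ∀ t, H (γ t) = M.closure (B \ {β t}))
include hS hB hβB hγ

theorem HasZeroPattern.apply_fundamental_ne_zero (t : Fin (d + 1)) : S (β t) (γ t) ≠ 0 := by
  rw [Ne, hS, hγ]
  exact hB.indep.notMem_closure_sdiff_of_mem (hβB ▸ Set.mem_range_self t)

include hβ in
theorem HasZeroPattern.submatrix_fundamental_eq_diagonal :
    S.submatrix β γ = diagonal fun t => S (β t) (γ t) := by
  ext t u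
  by_cases htu : t = u
  · subst htu; simp
  rw [diagonal_apply_ne _ htu, submatrix_apply, hS, hγ]
  exact M.subset_closure _ (Set.sdiff_subset.trans hB.subset_ground)
    ⟨hβB ▸ Set.mem_range_self t, hβ.ne htu⟩

include hβ in
theorem HasZeroPattern.det_submatrix_fundamental_ne_zero : (S.submatrix β γ).det ≠ 0 := by
  rw [hS.submatrix_fundamental_eq_diagonal hB hβ hβB hγ, det_diagonal]
  exact Finset.prod_ne_zero_iff.2 fun t _ => hS.apply_fundamental_ne_zero hB hβB hγ t

include hβ in
theorem HasZeroPattern.linearIndependent_row_fundamental :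
    LinearIndependent k (S.submatrix β id).row := by
  refine LinearIndependent.of_comp (LinearMap.funLeft k k γ) ?_
  exact linearIndependent_rows_of_det_ne_zero (hS.det_submatrix_fundamental_ne_zero hB hβ hβB hγ)

include hβ in
theorem HasZeroPattern.coeff_eq_zero_of_mem_closure {e : Fin n} {t : Fin (d + 1)}
    (he : e ∈ M.closure (B \ {β t})) : (S.submatrix id γ * (S.submatrix β γ)⁻¹) e t = 0 := by
  rw [hS.submatrix_fundamental_eq_diagonal hB hβ hβB hγ, inv_diagonal, mul_diagonal,
    submatrix_apply]
  exact mul_eq_zero_of_left ((hS e (γ t)).2 (hγ t ▸ he)) _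

include hβ in
theorem HasZeroPattern.row_mem_span_of_mem_closure (hmin : S.MinorsVanish (d + 2))
    {J : Set (Fin n)} (hJB : J ⊆ B) {e : Fin n} (he : e ∈ M.closure J) :
    S.row e ∈ Submodule.span k (S.row '' J) := by
  have hrow : S.row e = (S.submatrix id γ * (S.submatrix β γ)⁻¹) e ᵥ* S.submatrix β id :=
    congrFun (hmin.eq_mul_inv_mul (hS.det_submatrix_fundamental_ne_zero hB hβ hβB hγ)) e
  rw [hrow, vecMul_eq_sum]
  refine Submodule.sum_mem _ fun t _ => ?_
  by_cases htJ : β t ∈ J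
  · exact Submodule.smul_mem _ _ (Submodule.subset_span ⟨β t, htJ, rfl⟩)
  · have he' := M.closure_subset_closure (Set.subset_sdiff_singleton hJB htJ) he
    rw [hS.coeff_eq_zero_of_mem_closure hB hβ hβB hγ he', zero_smul]
    exact Submodule.zero_mem _

end FundamentalHyperplanes

section RealizationOfSlack

variable {k : Type*} [Field k] {n d h : ℕ} {M : Matroid (Fin n)} {H : Fin h → Set (Fin n)}
  {S : Matrix (Fin n) (Fin h) k} (hE : M.E = Set.univ) (hrk : HasRank M (d + 1))
  (hH : HypEnum M d H) (hS : HasZeroPattern H S) (hmin : S.MinorsVanish (d + 2))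
include hE hrk hH hS hmin

theorem HasZeroPattern.indep_iff_linearIndepOn_row (I : Set (Fin n)) :
    M.Indep I ↔ LinearIndepOn k S.row I := by
  constructor
  · intro hI
    obtain ⟨B, hB, hIB⟩ := hI.exists_isBase_superset
    obtain ⟨β, γ, hβ, hβB, hγ⟩ := exists_fundamental_hyperplanes hrk hH hB
    have hli := (linearIndepOn_range_iff hβ S.row).2
      (hS.linearIndependent_row_fundamental hB hβ hβB hγ)
    exact (hβB ▸ hli).mono hIB
  · intro hli
    by_contra hdep
    obtain ⟨J, hJ⟩ := M.exists_isBasis I (hE ▸ Set.subset_univ I)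
    obtain ⟨e, heI, heJ⟩ := Set.exists_of_ssubset
      (hJ.subset.ssubset_of_ne fun hJI => hdep (hJI ▸ hJ.indep))
    obtain ⟨B, hB, hJB⟩ := hJ.indep.exists_isBase_superset
    obtain ⟨β, γ, hβ, hβB, hγ⟩ := exists_fundamental_hyperplanes hrk hH hB
    have hspan := hS.row_mem_span_of_mem_closure hB hβ hβB hγ hmin hJB (hJ.subset_closure heI)
    exact ((linearIndepOn_insert heJ).1 (hli.mono (Set.insert_subset heI hJ.subset))).2 hspan

theorem HasZeroPattern.exists_isRealization : ∃ V : Matrix (Fin (d + 1)) (Fin n) k,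
    IsRealization M V := by
  have ⟨B, hB, _⟩ := hrk
  obtain ⟨β, γ, hβ, hβB, hγ⟩ := exists_fundamental_hyperplanes hrk hH hB
  set C := S.submatrix id γ * (S.submatrix β γ)⁻¹
  have hfac : S = C * S.submatrix β id :=
    hmin.eq_mul_inv_mul (hS.det_submatrix_fundamental_ne_zero hB hβ hβB hγ)
  refine ⟨Cᵀ, fun I => ?_⟩
  calc M.Indep I ↔ LinearIndepOn k (C * S.submatrix β id).row I := by
        rw [← hfac, hS.indep_iff_linearIndepOn_row hE hrk hH hmin]
    _ ↔ LinearIndepOn k C.row I :=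
        linearIndepOn_mul_iff C (hS.linearIndependent_row_fundamental hB hβ hβB hγ) I

end RealizationOfSlack

/-- `M` is realizable over `k` iff the slack variety has a torus point. -/
theorem stmt8 {k : Type*} [Field k] {n d h : ℕ} (M : Matroid (Fin n))
    (hE : M.E = Set.univ) (hrk : HasRank M (d + 1))
    (H : Fin h → Set (Fin n)) (hH : HypEnum M d H) :
    (∃ V : Matrix (Fin (d + 1)) (Fin n) k, IsRealization M V) ↔
      ∃ s : SlackVar H → k, (∀ e, s e ≠ 0) ∧
        ∀ f ∈ slackSet d H k, MvPolynomial.eval s f = 0 := by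
  rw [exists_torus_point_iff]
  constructor
  · rintro ⟨V, hV⟩
    obtain ⟨W, hW⟩ := hV.exists_isNormalMatrix hE fun j => (hH.2 _).1 ⟨j, rfl⟩
    exact ⟨Vᵀ * W, hW.hasZeroPattern, minorsVanish_mul _ _ (by omega)⟩
  · rintro ⟨S, hS, hmin⟩
    exact hS.exists_isRealization hE hrk hH hmin
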